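/- Let X = U₁# G# (U₂#)^T be of rank r, where U₁# ∈ ℝ^{n₁×r}, U₂# ∈ ℝ^{n₂×r} both satisfy the SSC, (U_i#)^T e = e, and G# ∈ ℝ^{r×r}. Suppose (U₁*, G*, U₂*) is any feasible point for min |det(G)| s.t. X = U₁ G U₂^T, U_i^T e = e, U_i ≥ 0, with |det(G*)| ≤ |det(G#)|. Then there exist permutation matrices Π₁, Π₂ such that U₁* = U₁# Π₁, U₂* = U₂# Π₂, and G* = Π₁^T G# Π₂. -/

import Mathlib

open Matrix

/-- Euclidean (ℓ₂) norm of a finitely supported real vector. -/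
noncomputable def l2 {r : Type*} [Fintype r] (x : r → ℝ) : ℝ :=
  Real.sqrt (∑ i, x i ^ 2)

/-- The convex cone generated by the rows of `H`. -/
def coneRows {n r : Type*} [Fintype n] [Fintype r]
    (H : Matrix n r ℝ) : Set (r → ℝ) :=
  {x | ∃ y : n → ℝ, (∀ i, 0 ≤ y i) ∧ x = Hᵀ *ᵥ y}

/-- The sufficiently scattered condition (SSC1 and SSC2) for a nonnegative
matrix `H ∈ ℝ₊^{n×r}`. -/
def SSC {n r : Type*} [Fintype n] [Fintype r] [DecidableEq r]
    (H : Matrix n r ℝ) : Prop :=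
  (∀ i j, 0 ≤ H i j) ∧
  ({x : r → ℝ | (∀ i, 0 ≤ x i) ∧
      Real.sqrt ((Fintype.card r : ℝ) - 1) * l2 x ≤ ∑ i, x i} ⊆ coneRows H) ∧
  ({y : r → ℝ | ∀ i, 0 ≤ (H *ᵥ y) i} ∩
      frontier {x : r → ℝ | l2 x ≤ ∑ i, x i} =
    {v : r → ℝ | ∃ lam : ℝ, 0 ≤ lam ∧ ∃ k : r, v = lam • (Pi.single k 1 : r → ℝ)})

/-!
Both factorizations of the rank-`r` matrix `X` share its column and row spaces, so
`U₁⋆ = U₁ A₁`, `U₂⋆ = U₂ A₂` and `G = A₁ G⋆ A₂ᵀ` for square `A₁, A₂` with unit column sums.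
The columns of `A_k` lie in `cone*(U_kᵀ)`, which SSC1 places inside `C* = {x : ‖x‖₂ ≤ eᵀx}`;
hence they have norm at most `1`, and Hadamard's inequality gives `|det A_k| ≤ 1`. Minimality of
`|det G⋆|` forces `|det A_k| = 1`, so every column has norm exactly `1 = eᵀx`: it lies on the
boundary of `C*`, and SSC2 makes it a standard basis vector. Thus `A_k` is a permutation matrix.
-/

namespace Matrix

theorem sum_mul_apply_of_sum_eq_one {R m n r : Type*} [NonAssocSemiring R] [Fintype m]
    [Fintype r] {U : Matrix m r R} (hU : ∀ k, ∑ i, U i k = 1) (A : Matrix r n R) (j : n) :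
    ∑ i, (U * A) i j = ∑ k, A k j := by
  simp only [mul_apply]
  rw [Finset.sum_comm]
  simp [← Finset.sum_mul, hU]

variable {K : Type*} [Field K] {m n r : Type*} [Fintype n] [Fintype r] [DecidableEq r]

theorem exists_mul_eq_one_of_card_le_rank (A : Matrix r n K) (h : Fintype.card r ≤ A.rank) :
    ∃ B : Matrix n r K, A * B = 1 := by
  rw [← mulVec_surjective_iff_exists_right_inverse, ← coe_mulVecLin, ← LinearMap.range_eq_top]
  refine Submodule.eq_top_of_finrank_eq (le_antisymm (Submodule.finrank_le _) ?_)
  simpa [rank] using h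

theorem det_ne_zero_of_card_le_rank_mul_mul {U : Matrix m r K} {W : Matrix r n K}
    {G : Matrix r r K} (hrank : Fintype.card r ≤ (U * G * W).rank) : G.det ≠ 0 := by
  obtain ⟨B, hB⟩ := exists_mul_eq_one_of_card_le_rank G
    (hrank.trans ((rank_mul_le_left _ _).trans (rank_mul_le_right _ _)))
  exact det_ne_zero_of_right_inverse hB

theorem exists_eq_mul_of_mul_eq {U V : Matrix m r K} {M N : Matrix r n K} (h : V * N = U * M)
    (hrank : Fintype.card r ≤ (V * N).rank) : ∃ A : Matrix r r K, V = U * A := by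
  obtain ⟨W, hW⟩ := exists_mul_eq_one_of_card_le_rank N (hrank.trans (rank_mul_le_right V N))
  exact ⟨M * W, by rw [← Matrix.mul_one V, ← hW, ← Matrix.mul_assoc, h, Matrix.mul_assoc]⟩

theorem eq_of_mul_mul_transpose_eq [Fintype m] {U : Matrix m r K} {W : Matrix n r K}
    {M N : Matrix r r K} (h : U * M * Wᵀ = U * N * Wᵀ)
    (hrank : Fintype.card r ≤ (U * M * Wᵀ).rank) : M = N := by
  obtain ⟨L, hL⟩ := exists_mul_eq_one_of_card_le_rank Uᵀ <| by
    rw [rank_transpose]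
    exact hrank.trans ((rank_mul_le_left _ _).trans (rank_mul_le_left _ _))
  obtain ⟨R, hR⟩ := exists_mul_eq_one_of_card_le_rank Wᵀ (hrank.trans (rank_mul_le_right _ _))
  have hL' : Lᵀ * U = 1 := by simpa using congrArg transpose hL
  have cancel : ∀ P : Matrix r r K, Lᵀ * (U * P * Wᵀ) * R = P := fun P => by
    rw [← Matrix.mul_assoc, ← Matrix.mul_assoc, hL', Matrix.one_mul, Matrix.mul_assoc, hR,
      Matrix.mul_one]
  rw [← cancel M, h, cancel]

theorem exists_eq_mul_of_mul_mul_transpose_eq [Fintype m] {U₁ V₁ : Matrix m r K}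
    {U₂ V₂ : Matrix n r K} {G G' : Matrix r r K} (h : U₁ * G * U₂ᵀ = V₁ * G' * V₂ᵀ)
    (hrank : Fintype.card r ≤ (U₁ * G * U₂ᵀ).rank) :
    ∃ A₁ A₂ : Matrix r r K, V₁ = U₁ * A₁ ∧ V₂ = U₂ * A₂ ∧ G = A₁ * G' * A₂ᵀ := by
  obtain ⟨A₁, rfl⟩ := exists_eq_mul_of_mul_eq (U := U₁) (V := V₁) (M := G * U₂ᵀ) (N := G' * V₂ᵀ)
    (by simp only [← Matrix.mul_assoc, h]) (by rwa [← Matrix.mul_assoc, ← h])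
  have hXT : V₂ * (G'ᵀ * (U₁ * A₁)ᵀ) = (U₁ * G * U₂ᵀ)ᵀ := by
    simp only [h, transpose_mul, transpose_transpose, Matrix.mul_assoc]
  obtain ⟨A₂, rfl⟩ := exists_eq_mul_of_mul_eq (U := U₂) (M := Gᵀ * U₁ᵀ)
    (by rw [hXT]; simp only [transpose_mul, transpose_transpose, Matrix.mul_assoc])
    (by rwa [hXT, rank_transpose])
  refine ⟨A₁, A₂, rfl, rfl, eq_of_mul_mul_transpose_eq (U := U₁) (W := U₂) ?_ hrank⟩
  simp only [h, transpose_mul, Matrix.mul_assoc]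

end Matrix

section L2

variable {ι : Type*} [Fintype ι]

-- The paper's `C`, `C*` and `cone*(Hᵀ)`.
def sscCone (ι : Type*) [Fintype ι] : Set (ι → ℝ) :=
  {x | (∀ i, 0 ≤ x i) ∧ Real.sqrt ((Fintype.card ι : ℝ) - 1) * l2 x ≤ ∑ i, x i}

def sscDualCone (ι : Type*) [Fintype ι] : Set (ι → ℝ) :=
  {x | l2 x ≤ ∑ i, x i}

def dualConeRows {n : Type*} [Fintype n] (H : Matrix n ι ℝ) : Set (ι → ℝ) :=
  {y | ∀ i, 0 ≤ (H *ᵥ y) i}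

theorem l2_nonneg (x : ι → ℝ) : 0 ≤ l2 x := Real.sqrt_nonneg _

theorem l2_sq (x : ι → ℝ) : l2 x ^ 2 = ∑ i, x i ^ 2 :=
  Real.sq_sqrt (by positivity)

theorem l2_eq_norm (x : ι → ℝ) : l2 x = ‖WithLp.toLp 2 x‖ := by
  simp [l2, EuclideanSpace.norm_eq]

theorem abs_le_l2 (x : ι → ℝ) (i : ι) : |x i| ≤ l2 x :=
  Real.abs_le_sqrt (Finset.single_le_sum (fun j _ => sq_nonneg (x j)) (Finset.mem_univ i))

theorem l2_add_le (x y : ι → ℝ) : l2 (x + y) ≤ l2 x + l2 y := by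
  simpa only [l2_eq_norm, WithLp.toLp_add] using norm_add_le _ _

theorem l2_const (c : ℝ) (hc : 0 ≤ c) : l2 (fun _ : ι => c) = c * Real.sqrt (Fintype.card ι) := by
  rw [l2, Finset.sum_const, Finset.card_univ, nsmul_eq_mul, mul_comm, Real.sqrt_mul (sq_nonneg c),
    Real.sqrt_sq hc]

theorem l2_sub_mem_sscCone (y : ι → ℝ) : (fun i => l2 y - y i) ∈ sscCone ι := by
  set t := l2 y
  set s := ∑ i, y i
  set c : ℝ := (Fintype.card ι : ℝ)
  have hsum : ∑ i, (t - y i) = c * t - s := by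
    simp [Finset.sum_sub_distrib, c, s]
  have hsq : ∑ i, (t - y i) ^ 2 = (c + 1) * t ^ 2 - 2 * t * s := by
    simp only [sub_sq, Finset.sum_add_distrib, Finset.sum_sub_distrib, ← Finset.mul_sum,
      Finset.sum_const, Finset.card_univ, nsmul_eq_mul, ← l2_sq]
    ring
  have hle : ∀ i, y i ≤ t := fun i => (le_abs_self _).trans (abs_le_l2 y i)
  have hsum_nonneg : 0 ≤ c * t - s := by
    rw [← hsum]
    exact Finset.sum_nonneg fun i _ => sub_nonneg.mpr (hle i)
  refine ⟨fun i => sub_nonneg.mpr (hle i), ?_⟩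
  rw [l2, ← Real.sqrt_mul' _ (by positivity), hsq, hsum, Real.sqrt_le_left hsum_nonneg]
  -- `(c t - s)² - (c - 1) ((c + 1) t² - 2 t s) = (t - s)²`
  nlinarith [sq_nonneg (t - s)]

theorem dotProduct_nonneg_of_mem_coneRows {n : Type*} [Fintype n] {H : Matrix n ι ℝ}
    {x y : ι → ℝ} (hx : x ∈ coneRows H) (hy : y ∈ dualConeRows H) : 0 ≤ x ⬝ᵥ y := by
  obtain ⟨z, hz, rfl⟩ := hx
  rw [← Matrix.vecMul_transpose, Matrix.transpose_transpose, ← Matrix.dotProduct_mulVec]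
  exact Finset.sum_nonneg fun i _ => mul_nonneg (hz i) (hy i)

theorem dualConeRows_subset_sscDualCone {n : Type*} [Fintype n] {H : Matrix n ι ℝ}
    (hH : sscCone ι ⊆ coneRows H) : dualConeRows H ⊆ sscDualCone ι := by
  intro y hy
  -- testing `y` against `‖y‖ e - y ∈ C ⊆ cone(Hᵀ)` gives `‖y‖ (eᵀy - ‖y‖) ≥ 0`
  have htest : 0 ≤ l2 y * ∑ i, y i - l2 y ^ 2 := by
    have h := dotProduct_nonneg_of_mem_coneRows (hH (l2_sub_mem_sscCone y)) hy
    simpa only [dotProduct, sub_mul, Finset.sum_sub_distrib, ← Finset.mul_sum, ← sq,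
      ← l2_sq] using h
  show l2 y ≤ ∑ i, y i
  rcases (l2_nonneg y).eq_or_lt with ht | ht
  · rw [← ht]
    exact Finset.sum_nonneg fun i _ => by linarith [neg_abs_le (y i), abs_le_l2 y i]
  · nlinarith

theorem col_mem_dualConeRows {n : Type*} [Fintype n] {H : Matrix n ι ℝ}
    {A : Matrix ι ι ℝ} (hpos : ∀ i j, 0 ≤ (H * A) i j) (j : ι) : A.col j ∈ dualConeRows H :=
  fun i => hpos i j

theorem sum_sub_const_lt_l2 (hι : 1 < Fintype.card ι) {v : ι → ℝ} (hv : l2 v = ∑ i, v i)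
    {δ : ℝ} (hδ : 0 < δ) : ∑ i, (v i - δ) < l2 fun i => v i - δ := by
  have htri : l2 v ≤ l2 (fun i => v i - δ) + δ * Real.sqrt (Fintype.card ι) := by
    rw [← l2_const δ hδ.le]
    convert l2_add_le (fun i => v i - δ) (fun _ => δ)
    ext i
    simp
  have hsqrt : Real.sqrt (Fintype.card ι) < Fintype.card ι :=
    Real.sqrt_lt_self_iff.mpr (by exact_mod_cast hι)
  rw [Finset.sum_sub_distrib, Finset.sum_const, Finset.card_univ, nsmul_eq_mul]
  nlinarith

open Filter Topology in
theorem mem_frontier_sscDualCone (hι : 1 < Fintype.card ι) {v : ι → ℝ}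
    (hv : l2 v = ∑ i, v i) : v ∈ frontier (sscDualCone ι) := by
  refine ⟨subset_closure hv.le, fun hint => ?_⟩
  have hlim : Tendsto (fun δ i => v i - δ) (𝓝[>] 0) (𝓝 v) := by
    refine tendsto_nhdsWithin_of_tendsto_nhds ?_
    simpa using ((continuous_pi fun i => continuous_const.sub continuous_id).tendsto 0 :
      Tendsto (fun δ i => v i - δ) (𝓝 0) _)
  obtain ⟨δ, hmem, hδ⟩ :=
    ((hlim.eventually (mem_interior_iff_mem_nhds.mp hint)).and self_mem_nhdsWithin).exists
  exact (sum_sub_const_lt_l2 hι hv hδ).not_ge hmem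

theorem l2_comp_equiv {κ : Type*} [Fintype κ] (x : ι → ℝ) (e : κ ≃ ι) :
    l2 (x ∘ e) = l2 x := by
  simp only [l2, Function.comp_apply, e.sum_comp (fun i => x i ^ 2)]

theorem abs_det_le_prod_l2_col_fin {n : ℕ} (A : Matrix (Fin n) (Fin n) ℝ) :
    |A.det| ≤ ∏ j, l2 (A.col j) := by
  have : Fact (Module.finrank ℝ (EuclideanSpace ℝ (Fin n)) = n) := ⟨finrank_euclideanSpace_fin⟩
  let b := (EuclideanSpace.basisFun (Fin n) ℝ).toBasis
  let v j : EuclideanSpace ℝ (Fin n) := WithLp.toLp 2 (A.col j)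
  have hdet : b.det v = A.det := by
    rw [Module.Basis.det_apply]
    rfl
  calc |A.det| = |b.orientation.volumeForm v| := by
        rw [b.orientation.volumeForm_robust' (EuclideanSpace.basisFun (Fin n) ℝ), hdet]
    _ ≤ ∏ j, ‖v j‖ := b.orientation.abs_volumeForm_apply_le v
    _ = ∏ j, l2 (A.col j) := by simp only [v, l2_eq_norm]

theorem abs_det_le_prod_l2_col [DecidableEq ι] (A : Matrix ι ι ℝ) :
    |A.det| ≤ ∏ j, l2 (A.col j) := by
  let e := Fintype.equivFin ι
  calc |A.det| = |(Matrix.reindex e e A).det| := by rw [Matrix.det_reindex_self]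
    _ ≤ ∏ k, l2 ((Matrix.reindex e e A).col k) := abs_det_le_prod_l2_col_fin _
    _ = ∏ j, l2 (A.col j) := by
      rw [← e.symm.prod_comp]
      exact Finset.prod_congr rfl fun k _ => l2_comp_equiv (A.col (e.symm k)) e.symm

end L2

theorem eq_one_of_one_le_prod {ι : Type*} [Fintype ι] [DecidableEq ι] {f : ι → ℝ}
    (h0 : ∀ j, 0 ≤ f j) (h1 : ∀ j, f j ≤ 1) (hprod : 1 ≤ ∏ j, f j) (j : ι) : f j = 1 := by
  rw [← Finset.mul_prod_erase _ _ (Finset.mem_univ j)] at hprod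
  have hrest : ∏ i ∈ Finset.univ.erase j, f i ≤ 1 :=
    Finset.prod_le_one (fun i _ => h0 i) fun i _ => h1 i
  nlinarith [h0 j, h1 j, Finset.prod_nonneg fun i (_ : i ∈ Finset.univ.erase j) => h0 i]

theorem Matrix.exists_eq_permMatrix_of_col_eq_single {R ι : Type*} [CommRing R] [Fintype ι]
    [DecidableEq ι] {A : Matrix ι ι R} {k : ι → ι} (hk : ∀ j, A.col j = Pi.single (k j) 1)
    (hdet : A.det ≠ 0) : ∃ σ : Equiv.Perm ι, A = σ.permMatrix R := by
  have hA : ∀ i j, A i j = (Pi.single (k j) 1 : ι → R) i := fun i j => congrFun (hk j) i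
  have hinj : Function.Injective k := fun j₁ j₂ hkj => by
    by_contra hne
    exact hdet (det_zero_of_column_eq hne fun i => by simp only [hA, hkj])
  refine ⟨(Equiv.ofBijective k hinj.bijective_of_finite).symm, ?_⟩
  ext i j
  simp [hA, PEquiv.toMatrix_apply, Pi.single_apply, Equiv.symm_apply_eq]

theorem Matrix.one_le_abs_det_of_eq_mul_mul_transpose {ι : Type*} [Fintype ι] [DecidableEq ι]
    {A₁ A₂ G G' : Matrix ι ι ℝ} (hG : G = A₁ * G' * A₂ᵀ) (hG₀ : G.det ≠ 0)
    (hdet : |G'.det| ≤ |G.det|) (h₁ : |A₁.det| ≤ 1) (h₂ : |A₂.det| ≤ 1) :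
    1 ≤ |A₁.det| ∧ 1 ≤ |A₂.det| := by
  have h : 1 ≤ |A₁.det| * |A₂.det| := by
    refine le_of_mul_le_mul_right ?_ (abs_pos.mpr hG₀)
    calc 1 * |G.det| = |A₁.det| * |A₂.det| * |G'.det| := by
          rw [one_mul, hG, det_mul, det_mul, det_transpose, abs_mul, abs_mul]
          ring
      _ ≤ |A₁.det| * |A₂.det| * |G.det| := by gcongr
  exact ⟨h.trans (mul_le_of_le_one_right (abs_nonneg _) h₂),
    h.trans (mul_le_of_le_one_left (abs_nonneg _) h₁)⟩

namespace SSC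

variable {n ι : Type*} [Fintype n] [Fintype ι] [DecidableEq ι] {H : Matrix n ι ℝ}

theorem eq_single_of_l2_eq_one (hH : SSC H) {y : ι → ℝ} (hy : y ∈ dualConeRows H)
    (hl2 : l2 y = 1) (hsum : ∑ i, y i = 1) : ∃ k, y = Pi.single k 1 := by
  have : Nonempty ι := by
    by_contra h
    simp [not_nonempty_iff.mp h] at hsum
  obtain hι | hι : Fintype.card ι = 1 ∨ 1 < Fintype.card ι := by
    have := Fintype.card_pos (α := ι); omega
  -- for a single index the boundary of `C* = [0, ∞)` is `{0}`, so SSC2 says nothing about `y`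
  · obtain ⟨k, hk⟩ := Fintype.card_eq_one_iff.mp hι
    rw [Fintype.sum_eq_single k fun i hi => absurd (hk i) hi] at hsum
    exact ⟨k, funext fun i => by rw [hk i, Pi.single_eq_same, hsum]⟩
  · have hmem : y ∈ dualConeRows H ∩ frontier (sscDualCone ι) :=
      ⟨hy, mem_frontier_sscDualCone hι (hl2.trans hsum.symm)⟩
    obtain ⟨lam, -, k, rfl⟩ := hH.2.2 ▸ hmem
    simp only [Pi.smul_apply, Pi.single_apply, smul_eq_mul, mul_ite, mul_one, mul_zero,
      Finset.sum_ite_eq', Finset.mem_univ, if_true] at hsum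
    exact ⟨k, by rw [hsum, one_smul]⟩

theorem l2_col_le_one (hH : SSC H) {A : Matrix ι ι ℝ} (hpos : ∀ i j, 0 ≤ (H * A) i j)
    (hsum : ∀ j, ∑ i, A i j = 1) (j : ι) : l2 (A.col j) ≤ 1 :=
  (dualConeRows_subset_sscDualCone hH.2.1 (col_mem_dualConeRows hpos j)).trans_eq (hsum j)

theorem abs_det_le_one (hH : SSC H) {A : Matrix ι ι ℝ} (hpos : ∀ i j, 0 ≤ (H * A) i j)
    (hsum : ∀ j, ∑ i, A i j = 1) : |A.det| ≤ 1 :=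
  (abs_det_le_prod_l2_col A).trans
    (Finset.prod_le_one (fun _ _ => l2_nonneg _) fun j _ => hH.l2_col_le_one hpos hsum j)

theorem exists_eq_permMatrix_of_one_le_abs_det (hH : SSC H) {A : Matrix ι ι ℝ}
    (hpos : ∀ i j, 0 ≤ (H * A) i j) (hsum : ∀ j, ∑ i, A i j = 1) (hdet : 1 ≤ |A.det|) :
    ∃ σ : Equiv.Perm ι, A = σ.permMatrix ℝ := by
  have hl2 : ∀ j, l2 (A.col j) = 1 := eq_one_of_one_le_prod (fun j => l2_nonneg _)
    (hH.l2_col_le_one hpos hsum) (hdet.trans (abs_det_le_prod_l2_col A))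
  choose k hk using fun j =>
    hH.eq_single_of_l2_eq_one (col_mem_dualConeRows hpos j) (hl2 j) (hsum j)
  exact Matrix.exists_eq_permMatrix_of_col_eq_single hk fun h => by norm_num [h] at hdet

end SSC

/-- Identifiability of min-vol order-2 nTD under the SSC (Theorem 4 /
Corollary 1): any feasible tri-factorization whose core has volume at most
that of the ground truth coincides with it up to permutations. -/
theorem minvol_tri_factorization_identifiable {n₁ n₂ r : ℕ}
    (X : Matrix (Fin n₁) (Fin n₂) ℝ)
    (U₁ U₁star : Matrix (Fin n₁) (Fin r) ℝ)
    (U₂ U₂star : Matrix (Fin n₂) (Fin r) ℝ)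
    (G Gstar : Matrix (Fin r) (Fin r) ℝ)
    (hrank : X.rank = r)
    (hU₁ssc : SSC U₁) (hU₂ssc : SSC U₂)
    (hU₁e : ∀ j, ∑ i, U₁ i j = 1) (hU₂e : ∀ j, ∑ i, U₂ i j = 1)
    (hX : X = U₁ * G * U₂ᵀ)
    (hU₁star : ∀ i j, 0 ≤ U₁star i j) (hU₂star : ∀ i j, 0 ≤ U₂star i j)
    (hU₁stare : ∀ j, ∑ i, U₁star i j = 1) (hU₂stare : ∀ j, ∑ i, U₂star i j = 1)
    (hXstar : X = U₁star * Gstar * U₂starᵀ)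
    (hdet : |Gstar.det| ≤ |G.det|) :
    ∃ (σ₁ σ₂ : Equiv.Perm (Fin r)),
      U₁star = U₁ * σ₁.permMatrix ℝ ∧
      U₂star = U₂ * σ₂.permMatrix ℝ ∧
      Gstar = (σ₁.permMatrix ℝ)ᵀ * G * σ₂.permMatrix ℝ := by
  have hrankX : Fintype.card (Fin r) ≤ (U₁ * G * U₂ᵀ).rank := by
    rw [Fintype.card_fin, ← hX, hrank]
  obtain ⟨A₁, A₂, rfl, rfl, hG⟩ :=
    Matrix.exists_eq_mul_of_mul_mul_transpose_eq (hX.symm.trans hXstar) hrankX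
  have hsum₁ : ∀ j, ∑ i, A₁ i j = 1 := fun j =>
    (Matrix.sum_mul_apply_of_sum_eq_one hU₁e A₁ j).symm.trans (hU₁stare j)
  have hsum₂ : ∀ j, ∑ i, A₂ i j = 1 := fun j =>
    (Matrix.sum_mul_apply_of_sum_eq_one hU₂e A₂ j).symm.trans (hU₂stare j)
  obtain ⟨h₁, h₂⟩ := Matrix.one_le_abs_det_of_eq_mul_mul_transpose hG
    (Matrix.det_ne_zero_of_card_le_rank_mul_mul hrankX) hdet
    (hU₁ssc.abs_det_le_one hU₁star hsum₁) (hU₂ssc.abs_det_le_one hU₂star hsum₂)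
  obtain ⟨σ₁, rfl⟩ := hU₁ssc.exists_eq_permMatrix_of_one_le_abs_det hU₁star hsum₁ h₁
  obtain ⟨σ₂, rfl⟩ := hU₂ssc.exists_eq_permMatrix_of_one_le_abs_det hU₂star hsum₂ h₂
  refine ⟨σ₁, σ₂, rfl, rfl, ?_⟩
  simp only [hG, Matrix.transpose_permMatrix, ← Matrix.mul_assoc, ← Matrix.permMatrix_mul,
    mul_inv_cancel, Matrix.permMatrix_one, Matrix.one_mul]
  simp [Matrix.mul_assoc, ← Matrix.permMatrix_mul]
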